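/- Let b > 0 and d, n positive integers with bd < 1. Let θ ∈ ℝⁿ and M an n×n symmetric matrix with M_{i,i} = 0 for all i, |M_{i,j}| ≤ b for all i, j, and each row of M having at most d nonzero entries. Let S ⊆ [n], x ∈ {−1,1}ⁿ, and v ≠ u with v, u ∉ S. Let ℓ ≥ 1 and suppose that every path from v to u in the graph with adjacency matrix M whose intermediate vertices all lie outside S has length at least ℓ. Then for X ∼ I_{(M,θ)}, |P[X_v = 1 | X_S = x_S, X_u = 1] − P[X_v = 1 | X_S = x_S, X_u = −1]| ≤ (bd)^ℓ/(1 − bd). -/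

import Mathlib

open Finset Real
open scoped Classical

noncomputable section

/-- The real spin value (`±1`) of a Boolean configuration entry. -/
def spin (s : Bool) : ℝ := if s then 1 else -1

/-- The unnormalized Ising weight `exp(θ·x + ½ x·Mx)` of a configuration. -/
def isingWt {n : ℕ} (M : Matrix (Fin n) (Fin n) ℝ) (θ : Fin n → ℝ) (σ : Fin n → Bool) : ℝ :=
  Real.exp ((∑ i, θ i * spin (σ i)) + (1 / 2) * ∑ i, ∑ j, spin (σ i) * M i j * spin (σ j))

/-- The Ising probability of a single configuration. -/
def isingProb {n : ℕ} (M : Matrix (Fin n) (Fin n) ℝ) (θ : Fin n → ℝ) (σ : Fin n → Bool) : ℝ :=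
  isingWt M θ σ / ∑ τ : Fin n → Bool, isingWt M θ τ

/-- The Ising probability of an event `A`. -/
def isingPr {n : ℕ} (M : Matrix (Fin n) (Fin n) ℝ) (θ : Fin n → ℝ)
    (A : (Fin n → Bool) → Prop) : ℝ :=
  ∑ σ ∈ Finset.univ.filter (fun σ => A σ), isingProb M θ σ

/-- The Ising conditional probability `P[A | B]`. -/
def isingCond {n : ℕ} (M : Matrix (Fin n) (Fin n) ℝ) (θ : Fin n → ℝ)
    (A B : (Fin n → Bool) → Prop) : ℝ :=
  isingPr M θ (fun σ => A σ ∧ B σ) / isingPr M θ B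

/-!
Pin `X_S = x_S` and couple the two conditional laws with `X_u = 1` and `X_u = -1`. Resampling a
uniformly chosen free site in both copies through the maximal coupling of the two heat-bath laws
preserves both marginals. The heat-bath probability at `i` is `sigmoid (2 h_i)`, which is
`1/4`-Lipschitz in the local field `h_i`, so the disagreement probabilities `D_j` obey
`D_i' ≤ (1 - 1/|F|) D_i + |F|⁻¹ ∑_j |M_ij| D_j` at free sites, while `D = 0` on `S` and
`D_u ≤ 1`. Since `∑_j |M_ij| ≤ bd`, the vector `(bd)^(min (dist(j, u), ℓ))` is a supersolution of
this recursion, so `D ≤ (bd)^(min (dist(j, u), ℓ)) + η^t` after `t` steps with `η < 1`; letting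
`t → ∞` bounds the influence of `u` on `v` by `(bd)^ℓ`.
-/

open Function

namespace Real

lemma abs_sigmoid_sub_le (a b : ℝ) : |sigmoid a - sigmoid b| ≤ |a - b| / 4 := by
  have hderiv : ∀ x, ‖deriv sigmoid x‖₊ ≤ 4⁻¹ := fun x => by
    rw [← NNReal.coe_le_coe, coe_nnnorm, deriv_sigmoid, Real.norm_eq_abs, NNReal.coe_inv,
      abs_of_nonneg (mul_nonneg (sigmoid_nonneg x) (by linarith [sigmoid_le_one x]))]
    norm_num
    nlinarith [sq_nonneg (sigmoid x - 1 / 2)]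
  have := (lipschitzWith_of_nnnorm_deriv_le differentiable_sigmoid hderiv).dist_le_mul a b
  simp only [Real.dist_eq, NNReal.coe_inv] at this
  norm_num at this
  linarith

end Real

def bernoulliMass (p : ℝ) (a : Bool) : ℝ := if a then p else 1 - p

/-- The maximal coupling of two Bernoulli laws: it puts mass `|p - q|` off the diagonal. -/
def bernoulliCoupling (p q : ℝ) (a c : Bool) : ℝ :=
  if a = c then (if a then min p q else 1 - max p q)
  else (if a then p - min p q else q - min p q)

section BernoulliCoupling

variable {p q : ℝ}

lemma bernoulliCoupling_nonneg (hp₀ : 0 ≤ p) (hp₁ : p ≤ 1) (hq₀ : 0 ≤ q) (hq₁ : q ≤ 1)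
    (a c : Bool) :
    0 ≤ bernoulliCoupling p q a c := by
  unfold bernoulliCoupling
  grind

lemma bernoulliCoupling_swap (a c : Bool) :
    bernoulliCoupling q p c a = bernoulliCoupling p q a c := by
  unfold bernoulliCoupling
  grind

lemma sum_bernoulliCoupling_right (a : Bool) :
    ∑ c, bernoulliCoupling p q a c = bernoulliMass p a := by
  simp only [Fintype.sum_bool, bernoulliCoupling, bernoulliMass]
  grind

lemma sum_sum_bernoulliCoupling : ∑ a, ∑ c, bernoulliCoupling p q a c = 1 := by
  simp_rw [sum_bernoulliCoupling_right]
  simp [bernoulliMass]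

lemma sum_sum_bernoulliCoupling_mul_ne :
    ∑ a, ∑ c, bernoulliCoupling p q a c * (if a = c then 0 else 1) = |p - q| := by
  simp only [Fintype.sum_bool, bernoulliCoupling]
  grind

end BernoulliCoupling

structure IsCoupling {α β : Type*} [Fintype α] [Fintype β]
    (γ : α → β → ℝ) (μ : α → ℝ) (ν : β → ℝ) : Prop where
  nonneg : ∀ a b, 0 ≤ γ a b
  sum_right : ∀ a, ∑ b, γ a b = μ a
  sum_left : ∀ b, ∑ a, γ a b = ν b

namespace IsCoupling

variable {α β : Type*} [Fintype α] [Fintype β] {γ : α → β → ℝ} {μ : α → ℝ} {ν : β → ℝ}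

lemma swap (h : IsCoupling γ μ ν) : IsCoupling (fun b a => γ a b) ν μ :=
  ⟨fun b a => h.nonneg a b, h.sum_left, h.sum_right⟩

lemma mul (hμ : ∀ a, 0 ≤ μ a) (hν : ∀ b, 0 ≤ ν b) (hμ₁ : ∑ a, μ a = 1) (hν₁ : ∑ b, ν b = 1) :
    IsCoupling (fun a b => μ a * ν b) μ ν :=
  ⟨fun a b => mul_nonneg (hμ a) (hν b), fun a => by rw [← Finset.mul_sum, hν₁, mul_one],
    fun b => by rw [← Finset.sum_mul, hμ₁, one_mul]⟩

lemma average {ι : Type*} {F : Finset ι} (hF : F.Nonempty) {γs : ι → α → β → ℝ}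
    (h : ∀ i ∈ F, IsCoupling (γs i) μ ν) :
    IsCoupling (fun a b => (#F : ℝ)⁻¹ * ∑ i ∈ F, γs i a b) μ ν := by
  have hcard : (#F : ℝ) ≠ 0 := by exact_mod_cast hF.card_pos.ne'
  refine ⟨fun a b => mul_nonneg (by positivity) (Finset.sum_nonneg fun i hi => (h i hi).nonneg a b),
    fun a => ?_, fun b => ?_⟩
  · rw [← Finset.mul_sum, Finset.sum_comm, Finset.sum_congr rfl fun i hi => (h i hi).sum_right a]
    simp [hcard]
  · rw [← Finset.mul_sum, Finset.sum_comm, Finset.sum_congr rfl fun i hi => (h i hi).sum_left b]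
    simp [hcard]

lemma sum_sum_eq_one (h : IsCoupling γ μ ν) (hμ : ∑ a, μ a = 1) : ∑ a, ∑ b, γ a b = 1 := by
  simp_rw [h.sum_right, hμ]

end IsCoupling

section Disagreement

variable {ι α : Type*} [Fintype ι] [DecidableEq ι] [Fintype α] [DecidableEq α]

def disagreement (γ : (ι → α) → (ι → α) → ℝ) (j : ι) : ℝ :=
  ∑ σ, ∑ τ, γ σ τ * if σ j = τ j then 0 else 1

variable {γ : (ι → α) → (ι → α) → ℝ} {μ ν : (ι → α) → ℝ}

lemma sum_sum_mul_abs_sub_le {f : (ι → α) → ℝ} {c : ι → ℝ} (hγ : ∀ σ τ, 0 ≤ γ σ τ)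
    (hf : ∀ σ τ, |f σ - f τ| ≤ ∑ k, c k * if σ k = τ k then 0 else 1) :
    ∑ σ, ∑ τ, γ σ τ * |f σ - f τ| ≤ ∑ k, c k * disagreement γ k := by
  calc ∑ σ, ∑ τ, γ σ τ * |f σ - f τ|
      ≤ ∑ σ, ∑ τ, γ σ τ * ∑ k, c k * if σ k = τ k then 0 else 1 :=
        Finset.sum_le_sum fun σ _ => Finset.sum_le_sum fun τ _ =>
          mul_le_mul_of_nonneg_left (hf σ τ) (hγ σ τ)
    _ = ∑ k, c k * disagreement γ k := by
        simp only [disagreement, Finset.mul_sum]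
        refine (Finset.sum_congr rfl fun σ _ => Finset.sum_comm).trans (Finset.sum_comm.trans ?_)
        exact Finset.sum_congr rfl fun k _ => Finset.sum_congr rfl fun σ _ =>
          Finset.sum_congr rfl fun τ _ => by ring

namespace IsCoupling

lemma disagreement_le_one (h : IsCoupling γ μ ν) (hμ : ∑ σ, μ σ = 1) (j : ι) :
    disagreement γ j ≤ 1 := by
  rw [← h.sum_sum_eq_one hμ]
  refine Finset.sum_le_sum fun σ _ => Finset.sum_le_sum fun τ _ => ?_
  have := h.nonneg σ τ
  split_ifs <;> simp [this]

lemma disagreement_eq_zero (h : IsCoupling γ μ ν) {j : ι} {x : α}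
    (hμ : ∀ σ, σ j ≠ x → μ σ = 0) (hν : ∀ τ, τ j ≠ x → ν τ = 0) : disagreement γ j = 0 := by
  have hγ : ∀ σ τ, σ j ≠ τ j → γ σ τ = 0 := fun σ τ hne => by
    by_cases hσ : σ j = x
    · have := h.sum_left τ ▸ hν τ (hσ ▸ hne.symm)
      exact (Finset.sum_eq_zero_iff_of_nonneg fun σ' _ => h.nonneg σ' τ).mp this σ (by simp)
    · have := h.sum_right σ ▸ hμ σ hσ
      exact (Finset.sum_eq_zero_iff_of_nonneg fun τ' _ => h.nonneg σ τ').mp this τ (by simp)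
  exact Finset.sum_eq_zero fun σ _ => Finset.sum_eq_zero fun τ _ => by
    split_ifs with hst
    exacts [mul_zero _, by rw [hγ σ τ hst, zero_mul]]

lemma abs_sub_le_disagreement (h : IsCoupling γ μ ν) (j : ι) (x : α) :
    |∑ σ, (if σ j = x then μ σ else 0) - ∑ τ, (if τ j = x then ν τ else 0)|
      ≤ disagreement γ j := by
  have hsplit : ∑ σ, (if σ j = x then μ σ else 0) - ∑ τ, (if τ j = x then ν τ else 0)
      = ∑ σ, ∑ τ, ((if σ j = x then γ σ τ else 0) - (if τ j = x then γ σ τ else 0)) := by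
    simp_rw [Finset.sum_sub_distrib, ← h.sum_right, ← h.sum_left, Finset.sum_ite_irrel]
    rw [Finset.sum_comm (f := fun σ τ => if τ j = x then γ σ τ else 0)]
    simp [Finset.sum_ite]
  rw [hsplit]
  refine (Finset.abs_sum_le_sum_abs _ _).trans (Finset.sum_le_sum fun σ _ => ?_)
  refine (Finset.abs_sum_le_sum_abs _ _).trans (Finset.sum_le_sum fun τ _ => ?_)
  have := h.nonneg σ τ
  split_ifs <;> simp_all [abs_of_nonneg]

end IsCoupling

end Disagreement

section Update

variable {ι β M : Type*} [DecidableEq ι] [Fintype ι] [Fintype β] [AddCommMonoid M]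

lemma sum_comp_update_swap (i : ι) (G : (ι → β) × β → M) :
    ∑ x : (ι → β) × β, G (update x.1 i x.2, x.1 i) = ∑ x, G x := by
  have hinv : Involutive fun x : (ι → β) × β => (update x.1 i x.2, x.1 i) := fun x => by simp
  exact Fintype.sum_equiv hinv.toPerm _ _ fun _ => rfl

end Update

section HeatBath

variable {ι : Type*} [DecidableEq ι]

/-- Conditionally on the other spins, the spin at `i` is Bernoulli(`p i σ`) under `μ`. -/
def IsHeatBathInvariant (μ : (ι → Bool) → ℝ) (p : ι → (ι → Bool) → ℝ) (i : ι) : Prop :=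
  ∀ σ, (∑ a, μ (update σ i a)) * bernoulliMass (p i σ) (σ i) = μ σ

lemma isHeatBathInvariant_of_update_true [Fintype ι] {μ : (ι → Bool) → ℝ}
    {p : ι → (ι → Bool) → ℝ} {i : ι} {t : (ι → Bool) → ℝ}
    (hμ : ∀ σ, μ (update σ i true) = exp (t σ) * μ (update σ i false))
    (hp : ∀ σ, p i σ = sigmoid (t σ)) : IsHeatBathInvariant μ p i := by
  intro σ
  conv_rhs => rw [← update_eq_self i σ]
  have hexp : exp (-t σ) = (exp (t σ))⁻¹ := exp_neg _
  generalize σ i = a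
  cases a <;> simp only [Fintype.sum_bool, hμ, hp, bernoulliMass, sigmoid_def, hexp,
    Bool.false_eq_true, ↓reduceIte]
  · field_simp
    ring
  · field_simp

/-- Resample site `i` in both coordinates of `γ` through the maximal coupling of the two
heat-bath laws. The formula reads the old state backwards from the new one `(σ, τ)`; this is
legitimate because `p i` ignores the spin at `i`. -/
def coupledUpdate (p : ι → (ι → Bool) → ℝ) (i : ι) (γ : (ι → Bool) → (ι → Bool) → ℝ)
    (σ τ : ι → Bool) : ℝ :=
  bernoulliCoupling (p i σ) (p i τ) (σ i) (τ i) * ∑ a, ∑ c, γ (update σ i a) (update τ i c)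

variable {p : ι → (ι → Bool) → ℝ} {i : ι} {γ : (ι → Bool) → (ι → Bool) → ℝ}
  {μ ν : (ι → Bool) → ℝ}

lemma coupledUpdate_swap (σ τ : ι → Bool) :
    coupledUpdate p i (fun τ σ => γ σ τ) τ σ = coupledUpdate p i γ σ τ := by
  rw [coupledUpdate, coupledUpdate, bernoulliCoupling_swap, Finset.sum_comm]

variable [Fintype ι]

lemma sum_coupledUpdate_right (hp : ∀ σ a, p i (update σ i a) = p i σ)
    (hγ : ∀ σ, ∑ τ, γ σ τ = μ σ) (hμ : IsHeatBathInvariant μ p i) (σ : ι → Bool) :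
    ∑ τ, coupledUpdate p i γ σ τ = μ σ := by
  set G : (ι → Bool) × Bool → ℝ := fun y =>
    bernoulliCoupling (p i σ) (p i y.1) (σ i) y.2 * ∑ a, γ (update σ i a) y.1
  calc ∑ τ, coupledUpdate p i γ σ τ
      = ∑ y : (ι → Bool) × Bool, G (update y.1 i y.2, y.1 i) := by
        simp only [coupledUpdate, G, Fintype.sum_prod_type, hp, Finset.mul_sum]
        exact Finset.sum_congr rfl fun τ _ => Finset.sum_comm
    _ = ∑ y, G y := sum_comp_update_swap i G
    _ = μ σ := by
        simp only [G, Fintype.sum_prod_type, ← Finset.sum_mul, sum_bernoulliCoupling_right]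
        rw [← Finset.mul_sum, Finset.sum_comm]
        simp only [hγ]
        rw [mul_comm, hμ σ]

lemma isCoupling_coupledUpdate (hp : ∀ σ a, p i (update σ i a) = p i σ)
    (hp₀ : ∀ σ, 0 ≤ p i σ) (hp₁ : ∀ σ, p i σ ≤ 1) (hγ : IsCoupling γ μ ν)
    (hμ : IsHeatBathInvariant μ p i) (hν : IsHeatBathInvariant ν p i) :
    IsCoupling (coupledUpdate p i γ) μ ν where
  nonneg σ τ := mul_nonneg (bernoulliCoupling_nonneg (hp₀ σ) (hp₁ σ) (hp₀ τ) (hp₁ τ) _ _)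
    (Finset.sum_nonneg fun _ _ => Finset.sum_nonneg fun _ _ => hγ.nonneg _ _)
  sum_right := sum_coupledUpdate_right hp hγ.sum_right hμ
  sum_left τ := by
    rw [Finset.sum_congr rfl fun σ _ => (coupledUpdate_swap σ τ).symm]
    exact sum_coupledUpdate_right hp hγ.swap.sum_right hν τ

lemma sum_sum_coupledUpdate_mul (hp : ∀ σ a, p i (update σ i a) = p i σ)
    (g : (ι → Bool) → (ι → Bool) → ℝ) :
    ∑ σ, ∑ τ, coupledUpdate p i γ σ τ * g σ τ
      = ∑ σ, ∑ τ, γ σ τ * ∑ a, ∑ c,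
          bernoulliCoupling (p i σ) (p i τ) a c * g (update σ i a) (update τ i c) := by
  set G : (ι → Bool) × Bool → (ι → Bool) × Bool → ℝ := fun x y =>
    bernoulliCoupling (p i x.1) (p i y.1) x.2 y.2 * γ x.1 y.1 *
      g (update x.1 i x.2) (update y.1 i y.2)
  calc ∑ σ, ∑ τ, coupledUpdate p i γ σ τ * g σ τ
      = ∑ x : (ι → Bool) × Bool, ∑ y : (ι → Bool) × Bool,
          G (update x.1 i x.2, x.1 i) (update y.1 i y.2, y.1 i) := by
        simp only [coupledUpdate, G, Fintype.sum_prod_type, hp, update_idem, update_eq_self,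
          Finset.mul_sum, Finset.sum_mul]
        exact Finset.sum_congr rfl fun σ _ => Finset.sum_comm
    _ = ∑ x, ∑ y, G x y := by
        rw [← sum_comp_update_swap i fun x => ∑ y, G x y]
        exact Finset.sum_congr rfl fun x _ => sum_comp_update_swap i (G _)
    _ = _ := by
        simp only [G, Fintype.sum_prod_type, Finset.mul_sum]
        refine Finset.sum_congr rfl fun σ _ => Finset.sum_comm.trans <|
          Finset.sum_congr rfl fun τ _ => Finset.sum_congr rfl fun a _ =>
            Finset.sum_congr rfl fun c _ => by ring

lemma disagreement_coupledUpdate_self (hp : ∀ σ a, p i (update σ i a) = p i σ) :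
    disagreement (coupledUpdate p i γ) i = ∑ σ, ∑ τ, γ σ τ * |p i σ - p i τ| := by
  simp only [disagreement, sum_sum_coupledUpdate_mul hp, update_self,
    sum_sum_bernoulliCoupling_mul_ne]

lemma disagreement_coupledUpdate_of_ne (hp : ∀ σ a, p i (update σ i a) = p i σ) {j : ι}
    (hij : j ≠ i) : disagreement (coupledUpdate p i γ) j = disagreement γ j := by
  simp only [disagreement, sum_sum_coupledUpdate_mul hp, update_of_ne hij, ← Finset.sum_mul,
    sum_sum_bernoulliCoupling, one_mul]

def coupledHeatBath (F : Finset ι) (p : ι → (ι → Bool) → ℝ)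
    (γ : (ι → Bool) → (ι → Bool) → ℝ) (σ τ : ι → Bool) : ℝ :=
  (#F : ℝ)⁻¹ * ∑ i ∈ F, coupledUpdate p i γ σ τ

lemma disagreement_coupledHeatBath_le {F : Finset ι} {j : ι} (hj : j ∈ F)
    (hp : ∀ i ∈ F, ∀ σ a, p i (update σ i a) = p i σ) (hγ : ∀ σ τ, 0 ≤ γ σ τ) {c : ι → ℝ}
    (hlip : ∀ σ τ, |p j σ - p j τ| ≤ ∑ k, c k * if σ k = τ k then 0 else 1) :
    disagreement (coupledHeatBath F p γ) j
      ≤ (1 - (#F : ℝ)⁻¹) * disagreement γ j + (#F : ℝ)⁻¹ * ∑ k, c k * disagreement γ k := by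
  have hF : (#F : ℝ) ≠ 0 := by exact_mod_cast (Finset.card_pos.mpr ⟨j, hj⟩).ne'
  have havg : disagreement (coupledHeatBath F p γ) j
      = (1 - (#F : ℝ)⁻¹) * disagreement γ j + (#F : ℝ)⁻¹ * ∑ σ, ∑ τ, γ σ τ * |p j σ - p j τ| := by
    calc disagreement (coupledHeatBath F p γ) j
        = (#F : ℝ)⁻¹ * ∑ i ∈ F, disagreement (coupledUpdate p i γ) j := by
          simp only [disagreement, coupledHeatBath, Finset.mul_sum, Finset.sum_mul]
          refine (Finset.sum_congr rfl fun σ _ => Finset.sum_comm).trans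
            (Finset.sum_comm.trans ?_)
          exact Finset.sum_congr rfl fun i _ => Finset.sum_congr rfl fun σ _ =>
            Finset.sum_congr rfl fun τ _ => by ring
      _ = _ := by
          rw [← Finset.add_sum_erase F _ hj, disagreement_coupledUpdate_self (hp j hj),
            Finset.sum_congr rfl fun i hi =>
              disagreement_coupledUpdate_of_ne (hp i (Finset.mem_of_mem_erase hi))
                (Finset.ne_of_mem_erase hi).symm,
            Finset.sum_const, Finset.card_erase_of_mem hj, nsmul_eq_mul,
            Nat.cast_sub (Finset.card_pos.mpr ⟨j, hj⟩)]
          field_simp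
          ring
  rw [havg]
  gcongr
  exact sum_sum_mul_abs_sub_le hγ hlip

end HeatBath

section Comparison

variable {ι : Type*} [Fintype ι] [DecidableEq ι] {F : Finset ι} {p : ι → (ι → Bool) → ℝ}
  {c : ι → ι → ℝ} {κ : ℝ} {μ ν : (ι → Bool) → ℝ} {E : ι → ℝ}

lemma exists_isCoupling_disagreement_le (hF : F.Nonempty)
    (hp : ∀ i ∈ F, ∀ σ a, p i (update σ i a) = p i σ)
    (hp₀ : ∀ i σ, 0 ≤ p i σ) (hp₁ : ∀ i σ, p i σ ≤ 1) (hc : ∀ i j, 0 ≤ c i j)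
    (hlip : ∀ i ∈ F, ∀ σ τ, |p i σ - p i τ| ≤ ∑ j, c i j * if σ j = τ j then 0 else 1)
    (hrow : ∀ i ∈ F, ∑ j, c i j ≤ κ)
    (hμ₀ : ∀ σ, 0 ≤ μ σ) (hμ₁ : ∑ σ, μ σ = 1) (hν₀ : ∀ σ, 0 ≤ ν σ) (hν₁ : ∑ σ, ν σ = 1)
    (hμ : ∀ i ∈ F, IsHeatBathInvariant μ p i) (hν : ∀ i ∈ F, IsHeatBathInvariant ν p i)
    (hE₀ : ∀ j, 0 ≤ E j) (hE : ∀ i ∈ F, ∑ j, c i j * E j ≤ E i)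
    (hout : ∀ γ, IsCoupling γ μ ν → ∀ j ∉ F, disagreement γ j ≤ E j) (t : ℕ) :
    ∃ γ, IsCoupling γ μ ν ∧ ∀ j, disagreement γ j ≤ E j + (1 - (1 - κ) / #F) ^ t := by
  set η := 1 - (1 - κ) / #F
  have hF₁ : (1 : ℝ) ≤ #F := by exact_mod_cast hF.card_pos
  obtain ⟨i₀, hi₀⟩ := hF
  have hκ : 0 ≤ κ := (Finset.sum_nonneg fun j _ => hc i₀ j).trans (hrow i₀ hi₀)
  have hη : 0 ≤ η := sub_nonneg.mpr (div_le_one_of_le₀ (by linarith) (by linarith))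
  induction t with
  | zero =>
    have hγ := IsCoupling.mul hμ₀ hν₀ hμ₁ hν₁
    exact ⟨_, hγ, fun j => by linarith [hγ.disagreement_le_one hμ₁ j, hE₀ j, pow_zero η]⟩
  | succ t ih =>
    obtain ⟨γ, hγ, hD⟩ := ih
    have hγ' : IsCoupling (coupledHeatBath F p γ) μ ν :=
      IsCoupling.average ⟨i₀, hi₀⟩ fun i hi =>
        isCoupling_coupledUpdate (hp i hi) (hp₀ i) (hp₁ i) hγ (hμ i hi) (hν i hi)
    refine ⟨_, hγ', fun j => ?_⟩
    by_cases hj : j ∈ F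
    · have hstep := disagreement_coupledHeatBath_le hj hp hγ.nonneg (hlip j hj)
      have hsum : ∑ k, c j k * disagreement γ k ≤ E j + κ * η ^ t := by
        calc ∑ k, c j k * disagreement γ k ≤ ∑ k, c j k * (E k + η ^ t) :=
              Finset.sum_le_sum fun k _ => mul_le_mul_of_nonneg_left (hD k) (hc j k)
          _ = ∑ k, c j k * E k + (∑ k, c j k) * η ^ t := by
              rw [Finset.sum_mul, ← Finset.sum_add_distrib]
              simp only [mul_add]
          _ ≤ E j + κ * η ^ t := add_le_add (hE j hj)
              (mul_le_mul_of_nonneg_right (hrow j hj) (pow_nonneg hη t))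
      have hF₀ : 0 ≤ (#F : ℝ)⁻¹ := by positivity
      calc disagreement (coupledHeatBath F p γ) j
          ≤ (1 - (#F : ℝ)⁻¹) * (E j + η ^ t) + (#F : ℝ)⁻¹ * (E j + κ * η ^ t) :=
            hstep.trans (add_le_add
              (mul_le_mul_of_nonneg_left (hD j) (sub_nonneg.mpr (inv_le_one_of_one_le₀ hF₁)))
              (mul_le_mul_of_nonneg_left hsum hF₀))
        _ = E j + η ^ (t + 1) := by
            rw [pow_succ]
            ring
    · exact (hout _ hγ' j hj).trans (le_add_of_nonneg_right (pow_nonneg hη _))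

theorem abs_sub_le_of_isHeatBathInvariant {v : ι} (hv : v ∈ F)
    (hp : ∀ i ∈ F, ∀ σ a, p i (update σ i a) = p i σ)
    (hp₀ : ∀ i σ, 0 ≤ p i σ) (hp₁ : ∀ i σ, p i σ ≤ 1) (hc : ∀ i j, 0 ≤ c i j)
    (hlip : ∀ i ∈ F, ∀ σ τ, |p i σ - p i τ| ≤ ∑ j, c i j * if σ j = τ j then 0 else 1)
    (hκ : κ < 1) (hrow : ∀ i ∈ F, ∑ j, c i j ≤ κ)
    (hμ₀ : ∀ σ, 0 ≤ μ σ) (hμ₁ : ∑ σ, μ σ = 1) (hν₀ : ∀ σ, 0 ≤ ν σ) (hν₁ : ∑ σ, ν σ = 1)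
    (hμ : ∀ i ∈ F, IsHeatBathInvariant μ p i) (hν : ∀ i ∈ F, IsHeatBathInvariant ν p i)
    (hE₀ : ∀ j, 0 ≤ E j) (hE : ∀ i ∈ F, ∑ j, c i j * E j ≤ E i)
    (hout : ∀ γ, IsCoupling γ μ ν → ∀ j ∉ F, disagreement γ j ≤ E j) (x : Bool) :
    |∑ σ, (if σ v = x then μ σ else 0) - ∑ τ, (if τ v = x then ν τ else 0)| ≤ E v := by
  have hF₁ : (1 : ℝ) ≤ #F := by exact_mod_cast Finset.card_pos.mpr ⟨v, hv⟩
  have hκ₀ : 0 ≤ κ := (Finset.sum_nonneg fun j _ => hc v j).trans (hrow v hv)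
  have hη₀ : 0 ≤ 1 - (1 - κ) / #F := sub_nonneg.mpr (div_le_one_of_le₀ (by linarith) (by linarith))
  have hη₁ : 1 - (1 - κ) / #F < 1 := sub_lt_self _ (div_pos (by linarith) (by linarith))
  have hlim := tendsto_const_nhds (x := E v) |>.add
    (tendsto_pow_atTop_nhds_zero_of_lt_one hη₀ hη₁)
  rw [add_zero] at hlim
  refine ge_of_tendsto' hlim fun t => ?_
  obtain ⟨γ, hγ, hD⟩ := exists_isCoupling_disagreement_le ⟨v, hv⟩ hp hp₀ hp₁ hc hlip hrow
    hμ₀ hμ₁ hν₀ hν₁ hμ hν hE₀ hE hout t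
  exact (hγ.abs_sub_le_disagreement v x).trans (hD v)

end Comparison

section Ising

open Matrix

variable {n : ℕ} {M : Matrix (Fin n) (Fin n) ℝ} {θ : Fin n → ℝ}

def localField (M : Matrix (Fin n) (Fin n) ℝ) (θ : Fin n → ℝ) (i : Fin n) (σ : Fin n → Bool) :
    ℝ :=
  θ i + (M *ᵥ (spin ∘ σ)) i

lemma isingWt_eq_exp (σ : Fin n → Bool) :
    isingWt M θ σ = exp (θ ⬝ᵥ (spin ∘ σ) + 1 / 2 * ((spin ∘ σ) ⬝ᵥ M *ᵥ (spin ∘ σ))) := by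
  simp only [isingWt, dotProduct, mulVec, Finset.mul_sum, Function.comp_apply, mul_assoc]

lemma localField_update_self (hdiag : ∀ i, M i i = 0) (i : Fin n) (σ : Fin n → Bool) (a : Bool) :
    localField M θ i (update σ i a) = localField M θ i σ := by
  simp only [localField, mulVec, dotProduct, Function.comp_apply]
  congr 1
  refine Finset.sum_congr rfl fun j _ => ?_
  rcases eq_or_ne j i with rfl | hj
  · simp [hdiag]
  · simp [update_of_ne hj]

lemma dotProduct_mulVec_sub_of_isSymm (hsymm : M.IsSymm) (x y : Fin n → ℝ) :
    x ⬝ᵥ M *ᵥ x - y ⬝ᵥ M *ᵥ y = (x - y) ⬝ᵥ M *ᵥ (x + y) := by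
  have hxy : y ⬝ᵥ M *ᵥ x = x ⬝ᵥ M *ᵥ y := by
    rw [dotProduct_mulVec, ← mulVec_transpose, hsymm.eq, dotProduct_comm]
  simp only [mulVec_add, dotProduct_add, sub_dotProduct, hxy]
  ring

lemma isingWt_update_true (hsymm : M.IsSymm) (hdiag : ∀ i, M i i = 0) (i : Fin n)
    (σ : Fin n → Bool) :
    isingWt M θ (update σ i true)
      = exp (2 * localField M θ i σ) * isingWt M θ (update σ i false) := by
  have hsub : spin ∘ update σ i true - spin ∘ update σ i false = Pi.single i 2 := by
    ext k
    rcases eq_or_ne k i with rfl | hk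
    · norm_num [spin]
    · simp [hk]
  have hadd : (M *ᵥ (spin ∘ update σ i true + spin ∘ update σ i false)) i
      = 2 * (M *ᵥ (spin ∘ σ)) i := by
    simp only [mulVec, dotProduct, Finset.mul_sum]
    refine Finset.sum_congr rfl fun j _ => ?_
    rcases eq_or_ne j i with rfl | hj
    · simp [hdiag]
    · simp only [Pi.add_apply, Function.comp_apply, update_of_ne hj]
      ring
  have hquad :=
    dotProduct_mulVec_sub_of_isSymm hsymm (spin ∘ update σ i true) (spin ∘ update σ i false)
  rw [hsub, single_dotProduct, hadd] at hquad
  have hlin : θ ⬝ᵥ (spin ∘ update σ i true) - θ ⬝ᵥ (spin ∘ update σ i false) = 2 * θ i := by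
    rw [← dotProduct_sub, hsub, dotProduct_single, mul_comm]
  rw [isingWt_eq_exp, isingWt_eq_exp, ← exp_add, localField]
  congr 1
  linarith

lemma abs_spin_sub_spin (a b : Bool) : |spin a - spin b| = 2 * if a = b then 0 else 1 := by
  cases a <;> cases b <;> norm_num [spin]

lemma abs_sigmoid_localField_sub_le (i : Fin n) (σ τ : Fin n → Bool) :
    |sigmoid (2 * localField M θ i σ) - sigmoid (2 * localField M θ i τ)|
      ≤ ∑ j, |M i j| * if σ j = τ j then 0 else 1 := by
  have hdiff :
      localField M θ i σ - localField M θ i τ = ∑ j, M i j * (spin (σ j) - spin (τ j)) := by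
    simp only [localField, mulVec, dotProduct, Function.comp_apply, mul_sub, Finset.sum_sub_distrib]
    ring
  calc |sigmoid (2 * localField M θ i σ) - sigmoid (2 * localField M θ i τ)|
      ≤ |localField M θ i σ - localField M θ i τ| / 2 := by
        have := abs_sigmoid_sub_le (2 * localField M θ i σ) (2 * localField M θ i τ)
        rw [← mul_sub, abs_mul, abs_two] at this
        linarith
    _ ≤ (∑ j, |M i j| * |spin (σ j) - spin (τ j)|) / 2 := by
        rw [hdiff]
        gcongr
        exact (Finset.abs_sum_le_sum_abs _ _).trans_eq (by simp only [abs_mul])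
    _ = ∑ j, |M i j| * if σ j = τ j then 0 else 1 := by
        simp only [abs_spin_sub_spin, Finset.sum_div]
        exact Finset.sum_congr rfl fun j _ => by ring

def isingCondProb (M : Matrix (Fin n) (Fin n) ℝ) (θ : Fin n → ℝ) (B : (Fin n → Bool) → Prop)
    (σ : Fin n → Bool) : ℝ :=
  if B σ then isingProb M θ σ / isingPr M θ B else 0

variable {B : (Fin n → Bool) → Prop}

lemma isingProb_pos (σ : Fin n → Bool) : 0 < isingProb M θ σ :=
  div_pos (exp_pos _) (Finset.sum_pos (fun _ _ => exp_pos _) Finset.univ_nonempty)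

lemma isingCondProb_nonneg (σ : Fin n → Bool) : 0 ≤ isingCondProb M θ B σ := by
  unfold isingCondProb
  split_ifs
  exacts [div_nonneg (isingProb_pos σ).le
    (Finset.sum_nonneg fun τ _ => (isingProb_pos τ).le), le_rfl]

lemma isingCondProb_of_not (h : ¬ B σ) : isingCondProb M θ B σ = 0 := if_neg h

lemma isingCond_eq_sum (A : (Fin n → Bool) → Prop) [DecidablePred A] :
    isingCond M θ A B = ∑ σ, if A σ then isingCondProb M θ B σ else 0 := by
  simp only [isingCond, isingCondProb, isingPr, Finset.sum_div, Finset.sum_filter]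
  refine Finset.sum_congr rfl fun σ _ => ?_
  by_cases hA : A σ <;> by_cases hB : B σ <;> simp [hA, hB]

lemma sum_isingCondProb (hB : ∃ σ, B σ) : ∑ σ, isingCondProb M θ B σ = 1 := by
  obtain ⟨σ₀, hσ₀⟩ := hB
  have hpos : 0 < isingPr M θ B :=
    Finset.sum_pos' (fun σ _ => (isingProb_pos σ).le) ⟨σ₀, by simpa using hσ₀, isingProb_pos σ₀⟩
  have := isingCond_eq_sum (M := M) (θ := θ) (B := B) fun _ => True
  simp only [if_true, isingCond, true_and] at this
  rw [← this, div_self hpos.ne']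

lemma isingCondProb_update_true (hsymm : M.IsSymm) (hdiag : ∀ i, M i i = 0) {i : Fin n}
    (hB : ∀ σ a, B (update σ i a) ↔ B σ) (σ : Fin n → Bool) :
    isingCondProb M θ B (update σ i true)
      = exp (2 * localField M θ i σ) * isingCondProb M θ B (update σ i false) := by
  simp only [isingCondProb, hB, isingProb, isingWt_update_true hsymm hdiag]
  split_ifs <;> ring

end Ising

section Graph

variable {ι R : Type*} [Zero R]

def outsideGraph (M : Matrix ι ι R) (S : Finset ι) : SimpleGraph ι :=
  SimpleGraph.fromRel fun i j => M i j ≠ 0 ∧ i ∉ S ∧ j ∉ S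

variable {M : Matrix ι ι R} {S : Finset ι}

lemma outsideGraph_adj_of_ne_zero {i j : ι} (hij : i ≠ j) (hi : i ∉ S) (hj : j ∉ S)
    (hM : M i j ≠ 0) : (outsideGraph M S).Adj i j :=
  ⟨hij, Or.inl ⟨hM, hi, hj⟩⟩

lemma le_edist_outsideGraph (hsymm : M.IsSymm) {u v : ι} {ℓ : ℕ}
    (hdist : ∀ (k : ℕ) (p : ℕ → ι), p 0 = v → p k = u →
      (∀ i < k, M (p i) (p (i + 1)) ≠ 0) →
      (∀ i, 0 < i → i < k → p i ∉ S) →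
      (∀ i ≤ k, ∀ j ≤ k, p i = p j → i = j) → ℓ ≤ k) :
    (ℓ : ℕ∞) ≤ (outsideGraph M S).edist v u := by
  by_contra! hlt
  have hreach := SimpleGraph.reachable_of_edist_ne_top hlt.ne_top
  obtain ⟨w, hw, hlen⟩ := hreach.exists_path_of_dist
  have hadj : ∀ t < w.length, M (w.getVert t) (w.getVert (t + 1)) ≠ 0 ∧ w.getVert t ∉ S := by
    intro t ht
    rcases (w.adj_getVert_succ ht).2 with ⟨hM, hS, -⟩ | ⟨hM, -, hS⟩
    · exact ⟨hM, hS⟩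
    · exact ⟨fun h => hM (by rw [← hsymm.apply, h]), hS⟩
  have := hdist w.length w.getVert w.getVert_zero w.getVert_length (fun t ht => (hadj t ht).1)
    (fun t _ ht => (hadj t ht).2) fun s hs t ht hst => hw.getVert_injOn hs ht hst
  rw [← hreach.coe_dist_eq_edist, ← hlen] at hlt
  exact hlt.not_ge (by exact_mod_cast this)

lemma exists_lipschitz_potential (hsymm : M.IsSymm) {u v : ι} {ℓ : ℕ}
    (hdist : ∀ (k : ℕ) (p : ℕ → ι), p 0 = v → p k = u →
      (∀ i < k, M (p i) (p (i + 1)) ≠ 0) →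
      (∀ i, 0 < i → i < k → p i ∉ S) →
      (∀ i ≤ k, ∀ j ≤ k, p i = p j → i = j) → ℓ ≤ k) :
    ∃ r : ι → ℕ, r u = 0 ∧ r v = ℓ ∧ ∀ i j, i ∉ S → j ∉ S → M i j ≠ 0 → r i ≤ r j + 1 := by
  set G := outsideGraph M S
  refine ⟨fun i => (min (G.edist i u) ℓ).toNat, by simp, ?_, fun i j hi hj hM => ?_⟩
  · have hℓ : (ℓ : ℕ∞) ≤ G.edist v u := le_edist_outsideGraph hsymm hdist
    simp [hℓ]
  rcases eq_or_ne i j with rfl | hij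
  · omega
  have hij : G.edist i u ≤ G.edist j u + 1 := by
    calc G.edist i u ≤ G.edist i j + G.edist j u := SimpleGraph.edist_triangle
      _ = G.edist j u + 1 := by
        rw [SimpleGraph.edist_eq_one_iff_adj.mpr (outsideGraph_adj_of_ne_zero hij hi hj hM),
          add_comm]
  have hmin : min (G.edist i u) ℓ ≤ min (G.edist j u) ℓ + 1 := by
    rw [← min_add_add_right]
    exact le_min (min_le_left _ _ |>.trans hij) (min_le_right _ _ |>.trans le_self_add)
  have hfin : min (G.edist j u) ℓ ≠ ⊤ := (min_le_right _ _ |>.trans_lt (ENat.natCast_lt_top ℓ)).ne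
  simpa [ENat.toNat_add hfin] using ENat.toNat_le_toNat hmin (by simp [hfin])

end Graph

lemma mul_pow_sub_one_le {a : ℝ} (ha : a ≤ 1) (k : ℕ) : a * a ^ (k - 1) ≤ a ^ k := by
  cases k with
  | zero => simpa using ha
  | succ k => rw [Nat.add_sub_cancel, pow_succ']

section RowBounds

variable {ι : Type*} [Fintype ι] {M : Matrix ι ι ℝ} {b : ℝ} {d : ℕ}

lemma sum_abs_le_of_sparse (hbound : ∀ i j, |M i j| ≤ b) (hsparse : ∀ i, #{j | M i j ≠ 0} ≤ d)
    (i : ι) : ∑ j, |M i j| ≤ b * d := by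
  have hb : 0 ≤ b := (abs_nonneg _).trans (hbound i i)
  calc ∑ j, |M i j| ≤ ∑ j, b * if M i j ≠ 0 then 1 else 0 :=
        Finset.sum_le_sum fun j _ => by
          split_ifs with h
          · simpa using hbound i j
          · simp [not_not.mp h]
    _ = b * #{j | M i j ≠ 0} := by rw [← Finset.mul_sum, Finset.sum_boole]
    _ ≤ b * d := by gcongr; exact_mod_cast hsparse i

lemma sum_abs_mul_le_of_ne_zero {E : ι → ℝ} {q : ℝ} {i : ι}
    (hE : ∀ j, M i j ≠ 0 → E j ≤ q) : ∑ j, |M i j| * E j ≤ (∑ j, |M i j|) * q := by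
  rw [Finset.sum_mul]
  refine Finset.sum_le_sum fun j _ => ?_
  by_cases h : M i j = 0
  · simp [h]
  · exact mul_le_mul_of_nonneg_left (hE j h) (abs_nonneg _)

lemma sum_abs_mul_pow_le [DecidableEq ι] (hb : 0 ≤ b) (hbd : b * d ≤ 1)
    (hbound : ∀ i j, |M i j| ≤ b) (hsparse : ∀ i, #{j | M i j ≠ 0} ≤ d) {S : Finset ι}
    {r : ι → ℕ} {i : ι} (hr : ∀ j ∉ S, M i j ≠ 0 → r i ≤ r j + 1) :
    ∑ j, |M i j| * (if j ∈ S then 0 else (b * d) ^ r j) ≤ (b * d) ^ r i := by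
  have hbd₀ : 0 ≤ b * d := by positivity
  have hnbr : ∀ j, M i j ≠ 0 → (if j ∈ S then 0 else (b * d) ^ r j) ≤ (b * d) ^ (r i - 1) :=
    fun j hM => by
      split_ifs with hjS
      · positivity
      · exact pow_le_pow_of_le_one hbd₀ hbd (by have := hr j hjS hM; omega)
  calc _ ≤ (∑ j, |M i j|) * (b * d) ^ (r i - 1) := sum_abs_mul_le_of_ne_zero hnbr
    _ ≤ b * d * (b * d) ^ (r i - 1) := by gcongr; exact sum_abs_le_of_sparse hbound hsparse i
    _ ≤ (b * d) ^ r i := mul_pow_sub_one_le hbd (r i)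

end RowBounds

theorem abs_sub_isingCondProb_le_pow {n : ℕ} {b : ℝ} {d : ℕ} (hb : 0 ≤ b) (hbd : b * d < 1)
    {M : Matrix (Fin n) (Fin n) ℝ} {θ : Fin n → ℝ} (hsymm : M.IsSymm) (hdiag : ∀ i, M i i = 0)
    (hbound : ∀ i j, |M i j| ≤ b) (hsparse : ∀ i, #{j | M i j ≠ 0} ≤ d)
    {S : Finset (Fin n)} (x : Fin n → Bool) {u v : Fin n} (hvu : v ≠ u) (hv : v ∉ S) (hu : u ∉ S)
    {r : Fin n → ℕ} (hr₀ : r u = 0) (hr : ∀ i j, i ∉ S → j ∉ S → M i j ≠ 0 → r i ≤ r j + 1) :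
    |∑ σ, (if σ v = true then
        isingCondProb M θ (fun σ => (∀ w ∈ S, σ w = x w) ∧ σ u = true) σ else 0) -
      ∑ σ, (if σ v = true then
        isingCondProb M θ (fun σ => (∀ w ∈ S, σ w = x w) ∧ σ u = false) σ else 0)|
      ≤ (b * d) ^ r v := by
  set B : Bool → (Fin n → Bool) → Prop := fun s σ => (∀ w ∈ S, σ w = x w) ∧ σ u = s
  set F : Finset (Fin n) := {i | i ∉ S ∧ i ≠ u}
  set E : Fin n → ℝ := fun j => if j ∈ S then 0 else (b * d) ^ r j
  have hF : ∀ {i}, i ∈ F ↔ i ∉ S ∧ i ≠ u := by simp [F]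
  have hB : ∀ s, ∀ i ∈ F, ∀ σ a, B s (update σ i a) ↔ B s σ := by
    intro s i hi σ a
    obtain ⟨hiS, hiu⟩ := hF.mp hi
    simp only [B, update_of_ne hiu.symm]
    exact and_congr_left' <| forall₂_congr fun w hw => by
      rw [update_of_ne (ne_of_mem_of_not_mem hw hiS)]
  have hBne : ∀ s, ∃ σ, B s σ := fun s =>
    ⟨update x u s, fun w hw => update_of_ne (ne_of_mem_of_not_mem hw hu) _ _, update_self ..⟩
  have hout : ∀ γ, IsCoupling γ (isingCondProb M θ (B true)) (isingCondProb M θ (B false)) →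
      ∀ j ∉ F, disagreement γ j ≤ E j := by
    intro γ hγ j hj
    by_cases hjS : j ∈ S
    · refine (hγ.disagreement_eq_zero (x := x j) ?_ ?_).le.trans (by simp [E, hjS])
      · exact fun σ hσ => isingCondProb_of_not fun h => hσ (h.1 j hjS)
      · exact fun σ hσ => isingCondProb_of_not fun h => hσ (h.1 j hjS)
    · obtain rfl : j = u := by simpa [hF, hjS] using hj
      simpa [E, hu, hr₀] using hγ.disagreement_le_one (sum_isingCondProb (hBne true)) j
  have hE : ∀ i ∈ F, ∑ j, |M i j| * E j ≤ E i := fun i hi => by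
    obtain ⟨hiS, -⟩ := hF.mp hi
    simpa [E, hiS] using sum_abs_mul_pow_le hb hbd.le hbound hsparse fun j hjS => hr i j hiS hjS
  have key := abs_sub_le_of_isHeatBathInvariant (F := F) (hF.mpr ⟨hv, hvu⟩)
    (p := fun i σ => sigmoid (2 * localField M θ i σ)) (c := fun i j => |M i j|)
    (fun i _ σ a => by simp only [localField_update_self hdiag])
    (fun _ _ => sigmoid_nonneg _) (fun _ _ => sigmoid_le_one _) (fun _ _ => abs_nonneg _)
    (fun i _ => abs_sigmoid_localField_sub_le i) hbd
    (fun i _ => sum_abs_le_of_sparse hbound hsparse i)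
    isingCondProb_nonneg (sum_isingCondProb (hBne true))
    isingCondProb_nonneg (sum_isingCondProb (hBne false))
    (fun i hi => isHeatBathInvariant_of_update_true
      (isingCondProb_update_true hsymm hdiag (hB true i hi)) fun _ => rfl)
    (fun i hi => isHeatBathInvariant_of_update_true
      (isingCondProb_update_true hsymm hdiag (hB false i hi)) fun _ => rfl)
    (fun j => by positivity) hE hout true
  simpa [E, hv] using key

theorem stmt4_general {n : ℕ} (b : ℝ) (d : ℕ) (hb : 0 < b)
    (hbd : b * d < 1)
    (M : Matrix (Fin n) (Fin n) ℝ) (θ : Fin n → ℝ)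
    (hsymm : M.IsSymm) (hdiag : ∀ i, M i i = 0)
    (hbound : ∀ i j, |M i j| ≤ b)
    (hsparse : ∀ i, (Finset.univ.filter (fun j => M i j ≠ 0)).card ≤ d)
    (S : Finset (Fin n)) (x : Fin n → Bool) (v u : Fin n)
    (hvu : v ≠ u) (hv : v ∉ S) (hu : u ∉ S)
    (ℓ : ℕ)
    (hdist : ∀ (k : ℕ) (p : ℕ → Fin n), p 0 = v → p k = u →
      (∀ i < k, M (p i) (p (i + 1)) ≠ 0) →
      (∀ i, 0 < i → i < k → p i ∉ S) →
      (∀ i ≤ k, ∀ j ≤ k, p i = p j → i = j) → ℓ ≤ k) :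
    |isingCond M θ (fun σ => σ v = true)
        (fun σ => (∀ w ∈ S, σ w = x w) ∧ σ u = true) -
      isingCond M θ (fun σ => σ v = true)
        (fun σ => (∀ w ∈ S, σ w = x w) ∧ σ u = false)|
      ≤ (b * d) ^ ℓ / (1 - b * d) := by
  obtain ⟨r, hr₀, hrv, hr⟩ := exists_lipschitz_potential hsymm hdist
  rw [isingCond_eq_sum, isingCond_eq_sum]
  calc _ ≤ (b * d) ^ r v :=
        abs_sub_isingCondProb_le_pow hb.le hbd hsymm hdiag hbound hsparse x hvu hv hu hr₀ hr
    _ = (b * d) ^ ℓ := by rw [hrv]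
    _ ≤ (b * d) ^ ℓ / (1 - b * d) :=
        le_div_self (by positivity) (by linarith) (by linarith [mul_nonneg hb.le d.cast_nonneg])

/-- If every path from `v` to `u` whose intermediate vertices lie outside `S`
has length at least `ℓ`, then the conditional influence of `u` on `v` given `X_S` is at most
`(bd)^ℓ/(1-bd)`. -/
theorem stmt4 {n : ℕ} (b : ℝ) (d : ℕ) (hb : 0 < b) (hd : 0 < d) (hn : 0 < n)
    (hbd : b * d < 1)
    (M : Matrix (Fin n) (Fin n) ℝ) (θ : Fin n → ℝ)
    (hsymm : M.IsSymm) (hdiag : ∀ i, M i i = 0)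
    (hbound : ∀ i j, |M i j| ≤ b)
    (hsparse : ∀ i, (Finset.univ.filter (fun j => M i j ≠ 0)).card ≤ d)
    (S : Finset (Fin n)) (x : Fin n → Bool) (v u : Fin n)
    (hvu : v ≠ u) (hv : v ∉ S) (hu : u ∉ S)
    (ℓ : ℕ) (hℓ : 1 ≤ ℓ)
    (hdist : ∀ (k : ℕ) (p : ℕ → Fin n), p 0 = v → p k = u →
      (∀ i < k, M (p i) (p (i + 1)) ≠ 0) →
      (∀ i, 0 < i → i < k → p i ∉ S) →
      (∀ i ≤ k, ∀ j ≤ k, p i = p j → i = j) → ℓ ≤ k) :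
    |isingCond M θ (fun σ => σ v = true)
        (fun σ => (∀ w ∈ S, σ w = x w) ∧ σ u = true) -
      isingCond M θ (fun σ => σ v = true)
        (fun σ => (∀ w ∈ S, σ w = x w) ∧ σ u = false)|
      ≤ (b * d) ^ ℓ / (1 - b * d) :=
  stmt4_general b d hb hbd M θ hsymm hdiag hbound hsparse S x v u hvu hv hu ℓ hdist
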